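/- Let G be a simple connected graph on n ≥ 2 vertices. Then μ₁(G) ≥ d₁(G) + 1, where μ₁(G) is the largest eigenvalue of the Laplacian L(G) and d₁(G) is the maximum degree of G, with equality if and only if G has a vertex of degree n − 1. -/

import Mathlib

/-!
Take a vertex `v` of maximum degree `Δ` and the test vector `x = Δ • e_v - 𝟙_{N(v)}`. Then
`x ⬝ x = Δ (Δ + 1)`, while the Laplacian form splits as `xᵀ L(G) x = xᵀ L(G') x + Δ (Δ + 1)²`,
where `G'` is `G` with the edges at `v` deleted; as `μ₁` is the maximum of the Rayleigh quotient,
`μ₁ ≥ Δ + 1`. If equality holds, `xᵀ L(G') x = 0`, so `x` is constant along the edges of `G'`;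
as `x` is `-1` on `N(v)` and `0` off `N[v]`, no edge leaves `N[v]`, and connectivity forces
`N[v]` to be everything. Conversely `xᵀ L x ≤ n ‖x‖² - (∑ x)²` gives `μ₁ ≤ n`, which is `Δ + 1`
when some vertex has degree `n - 1`.
-/

open Matrix

/-- The signless Laplacian matrix `Q(G) = D + A` of a simple graph, over `ℝ`. -/
def sLapMatrix {m : ℕ} (G : SimpleGraph (Fin m)) [DecidableRel G.Adj] :
    Matrix (Fin m) (Fin m) ℝ :=
  G.degMatrix ℝ + G.adjMatrix ℝ

/-- `q` lists the eigenvalues of `A` (with multiplicity) in non-increasing order. -/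
def IsEigSeq {m : ℕ} (A : Matrix (Fin m) (Fin m) ℝ) (q : Fin m → ℝ) : Prop :=
  Antitone q ∧ ∃ (hA : A.IsHermitian) (σ : Equiv.Perm (Fin m)),
    ∀ i, q i = hA.eigenvalues (σ i)

/-- `d` lists the degrees of `G` (with multiplicity) in non-increasing order. -/
def IsDegSeq {m : ℕ} (G : SimpleGraph (Fin m)) [DecidableRel G.Adj] (d : Fin m → ℕ) : Prop :=
  Antitone d ∧ ∃ σ : Equiv.Perm (Fin m), ∀ i, d i = G.degree (σ i)

open scoped ComplexOrder

namespace Matrix.IsHermitian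

variable {n 𝕜 : Type*} [Fintype n] [DecidableEq n] [RCLike 𝕜]

theorem posSemidef_algebraMap_sub_iff {A : Matrix n n 𝕜} (hA : A.IsHermitian) (c : ℝ) :
    (algebraMap ℝ (Matrix n n 𝕜) c - A).PosSemidef ↔ ∀ i, hA.eigenvalues i ≤ c := by
  have hB : (algebraMap ℝ (Matrix n n 𝕜) c - A).IsHermitian :=
    (IsSelfAdjoint.algebraMap _ (.all c)).sub hA
  rw [hB.posSemidef_iff_eigenvalues_nonneg]
  simp only [Pi.le_def, Pi.zero_apply]
  rw [← Set.forall_mem_range (p := (0 ≤ ·)), ← Set.forall_mem_range (p := (· ≤ c)),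
    ← hB.spectrum_real_eq_range_eigenvalues, ← hA.spectrum_real_eq_range_eigenvalues,
    ← spectrum.singleton_sub_eq]
  simp

theorem forall_dotProduct_mulVec_le_iff {A : Matrix n n ℝ} (hA : A.IsHermitian) (c : ℝ) :
    (∀ x, x ⬝ᵥ (A *ᵥ x) ≤ c * (x ⬝ᵥ x)) ↔ ∀ i, hA.eigenvalues i ≤ c := by
  have hB : (algebraMap ℝ (Matrix n n ℝ) c - A).IsHermitian :=
    (IsSelfAdjoint.algebraMap _ (.all c)).sub hA
  rw [← hA.posSemidef_algebraMap_sub_iff, posSemidef_iff_dotProduct_mulVec, and_iff_right hB]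
  simp [Algebra.algebraMap_eq_smul_one, sub_mulVec, smul_mulVec, dotProduct_sub]

end Matrix.IsHermitian

theorem IsEigSeq.head_le_iff {m : ℕ} {A : Matrix (Fin m) (Fin m) ℝ} {q : Fin m → ℝ}
    (hq : IsEigSeq A q) (hm : 0 < m) (c : ℝ) :
    q ⟨0, hm⟩ ≤ c ↔ ∀ x, x ⬝ᵥ (A *ᵥ x) ≤ c * (x ⬝ᵥ x) := by
  obtain ⟨hanti, hA, σ, hσ⟩ := hq
  rw [hA.forall_dotProduct_mulVec_le_iff]
  refine ⟨fun h i => ?_, fun h => hσ _ ▸ h _⟩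
  calc hA.eigenvalues i = q (σ.symm i) := by rw [hσ, σ.apply_symm_apply]
    _ ≤ q ⟨0, hm⟩ := hanti (Nat.zero_le _)
    _ ≤ c := h

theorem IsDegSeq.head_eq_maxDegree {m : ℕ} {G : SimpleGraph (Fin m)} [DecidableRel G.Adj]
    {d : Fin m → ℕ} (hd : IsDegSeq G d) (hm : 0 < m) : d ⟨0, hm⟩ = G.maxDegree := by
  obtain ⟨hanti, σ, hσ⟩ := hd
  refine le_antisymm (hσ _ ▸ G.degree_le_maxDegree _) (G.maxDegree_le_of_forall_degree_le _ ?_)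
  intro v
  calc G.degree v = d (σ.symm v) := by rw [hσ, σ.apply_symm_apply]
    _ ≤ d ⟨0, hm⟩ := hanti (Nat.zero_le _)

namespace SimpleGraph

variable {V : Type*} [Fintype V] [DecidableEq V] (G : SimpleGraph V) [DecidableRel G.Adj]

theorem dotProduct_lapMatrix_mulVec (x : V → ℝ) :
    x ⬝ᵥ (G.lapMatrix ℝ *ᵥ x) = (∑ i, ∑ j, if G.Adj i j then (x i - x j) ^ 2 else 0) / 2 := by
  rw [← toLinearMap₂'_apply', lapMatrix_toLinearMap₂']

theorem dotProduct_lapMatrix_mulVec_nonneg (x : V → ℝ) : 0 ≤ x ⬝ᵥ (G.lapMatrix ℝ *ᵥ x) := by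
  simpa using (posSemidef_lapMatrix ℝ G).dotProduct_mulVec_nonneg x

theorem dotProduct_lapMatrix_mulVec_le_card_mul (x : V → ℝ) :
    x ⬝ᵥ (G.lapMatrix ℝ *ᵥ x) ≤ Fintype.card V * (x ⬝ᵥ x) := by
  rw [dotProduct_lapMatrix_mulVec]
  calc (∑ i, ∑ j, if G.Adj i j then (x i - x j) ^ 2 else 0) / 2
      ≤ (∑ i, ∑ j, (x i - x j) ^ 2) / 2 := by
        gcongr with i _ j _
        split_ifs
        exacts [le_rfl, sq_nonneg _]
    _ = Fintype.card V * (x ⬝ᵥ x) - (∑ i, x i) ^ 2 := by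
        simp only [sub_sq, Finset.sum_add_distrib, Finset.sum_sub_distrib, Finset.sum_const,
          Finset.card_univ, ← Finset.mul_sum, ← Finset.sum_mul, dotProduct, nsmul_eq_mul]
        simp only [← sq]
        ring
    _ ≤ Fintype.card V * (x ⬝ᵥ x) := sub_le_self _ (sq_nonneg _)

theorem dotProduct_lapMatrix_mulVec_eq_deleteIncidenceSet_add (x : V → ℝ) (v : V) :
    x ⬝ᵥ (G.lapMatrix ℝ *ᵥ x) = x ⬝ᵥ ((G.deleteIncidenceSet v).lapMatrix ℝ *ᵥ x) +
      ∑ w ∈ G.neighborFinset v, (x v - x w) ^ 2 := by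
  have hsplit : ∀ i j, (if G.Adj i j then (x i - x j) ^ 2 else 0) =
      (if (G.deleteIncidenceSet v).Adj i j then (x i - x j) ^ 2 else 0) +
      (if i = v ∧ G.Adj v j then (x v - x j) ^ 2 else 0) +
      (if j = v ∧ G.Adj v i then (x v - x i) ^ 2 else 0) := by
    intro i j
    by_cases hi : i = v <;> by_cases hj : j = v <;>
      simp [deleteIncidenceSet_adj, hi, hj, G.adj_comm i v, sub_sq_comm (x i)]
  rw [dotProduct_lapMatrix_mulVec, dotProduct_lapMatrix_mulVec,
    Finset.sum_congr rfl fun i _ => Finset.sum_congr rfl fun j _ => hsplit i j]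
  simp only [Finset.sum_add_distrib, ite_and, Finset.sum_ite_irrel, Finset.sum_const_zero,
    Finset.sum_ite_eq', Finset.mem_univ, if_true, neighborFinset_eq_filter, Finset.sum_filter]
  ring

noncomputable def starVec (v : V) : V → ℝ :=
  fun w => if w = v then G.degree v else if G.Adj v w then -1 else 0

variable {G}

theorem starVec_of_adj {v w : V} (h : G.Adj v w) : G.starVec v w = -1 := by
  simp [starVec, h, h.ne']

theorem starVec_dotProduct_self (v : V) :
    G.starVec v ⬝ᵥ G.starVec v = G.degree v * (G.degree v + 1) := by
  have hsq : ∀ w, G.starVec v w * G.starVec v w =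
      (if w = v then (G.degree v : ℝ) ^ 2 else 0) + (if G.Adj v w then 1 else 0) := by
    intro w
    by_cases hw : w = v
    · simp [starVec, hw, sq]
    · by_cases hvw : G.Adj v w <;> simp [starVec, hw, hvw]
  simp only [dotProduct, hsq, Finset.sum_add_distrib, Finset.sum_ite_eq', Finset.mem_univ, if_true,
    ← degree_eq_sum_if_adj]
  ring

theorem dotProduct_lapMatrix_mulVec_starVec (v : V) :
    G.starVec v ⬝ᵥ (G.lapMatrix ℝ *ᵥ G.starVec v) =
      G.starVec v ⬝ᵥ ((G.deleteIncidenceSet v).lapMatrix ℝ *ᵥ G.starVec v) +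
        G.degree v * (G.degree v + 1) ^ 2 := by
  rw [dotProduct_lapMatrix_mulVec_eq_deleteIncidenceSet_add,
    Finset.sum_congr rfl fun w hw => by rw [starVec_of_adj ((mem_neighborFinset G v w).1 hw)],
    Finset.sum_const, card_neighborFinset_eq_degree, nsmul_eq_mul]
  simp [starVec]

theorem degree_mul_sq_le_dotProduct_lapMatrix_mulVec_starVec (v : V) :
    G.degree v * (G.degree v + 1) ^ 2 ≤ G.starVec v ⬝ᵥ (G.lapMatrix ℝ *ᵥ G.starVec v) := by
  rw [dotProduct_lapMatrix_mulVec_starVec]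
  exact le_add_of_nonneg_left (dotProduct_lapMatrix_mulVec_nonneg _ _)

theorem isUniversal_of_dotProduct_lapMatrix_mulVec_starVec_le (hG : G.Preconnected) (v : V)
    (h : G.starVec v ⬝ᵥ (G.lapMatrix ℝ *ᵥ G.starVec v) ≤ G.degree v * (G.degree v + 1) ^ 2) :
    G.IsUniversal v := by
  set G' := G.deleteIncidenceSet v
  have hzero : G.starVec v ⬝ᵥ (G'.lapMatrix ℝ *ᵥ G.starVec v) = 0 := by
    rw [dotProduct_lapMatrix_mulVec_starVec] at h
    exact le_antisymm (by linarith) (dotProduct_lapMatrix_mulVec_nonneg _ _)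
  have hconst : ∀ a b, G'.Adj a b → G.starVec v a = G.starVec v b := by
    rwa [← lapMatrix_toLinearMap₂'_apply'_eq_zero_iff_forall_adj, toLinearMap₂'_apply']
  intro w hvw
  by_contra hw
  obtain ⟨p⟩ := hG v w
  obtain ⟨⟨⟨a, b⟩, hab⟩, -, ha, hb⟩ :=
    p.exists_boundary_dart (insert v (G.neighborSet v)) (Set.mem_insert v _)
      (by simp [hvw.symm, hw])
  simp only [Set.mem_insert_iff, mem_neighborSet, not_or] at ha hb
  obtain rfl | hva := ha
  · exact hb.2 hab
  · have := hconst a b (deleteIncidenceSet_adj.2 ⟨hab, hva.ne', hb.1⟩)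
    rw [starVec_of_adj hva] at this
    simp [starVec, hb.1, hb.2] at this

end SimpleGraph

theorem mu_one_ge_d_one_add_one {n : ℕ} (hn : 2 ≤ n)
    (G : SimpleGraph (Fin n)) [DecidableRel G.Adj] (hG : G.Connected)
    (mu : Fin n → ℝ) (hmu : IsEigSeq (G.lapMatrix ℝ) mu)
    (d : Fin n → ℕ) (hd : IsDegSeq G d) :
    mu ⟨0, by omega⟩ ≥ (d ⟨0, by omega⟩ : ℝ) + 1 ∧
    (mu ⟨0, by omega⟩ = (d ⟨0, by omega⟩ : ℝ) + 1 ↔ ∃ v, G.degree v = n - 1) := by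
  have hn0 : 0 < n := by omega
  have : Nontrivial (Fin n) := Fin.nontrivial_iff_two_le.2 hn
  rw [hd.head_eq_maxDegree hn0]
  obtain ⟨v, hv⟩ := G.exists_maximal_degree_vertex
  have hpos : (0 : ℝ) < G.degree v := Nat.cast_pos.2 (hG.preconnected.degree_pos_of_nontrivial v)
  have hray := (hmu.head_le_iff hn0 _).1 le_rfl (G.starVec v)
  rw [SimpleGraph.starVec_dotProduct_self] at hray
  have hlow := SimpleGraph.degree_mul_sq_le_dotProduct_lapMatrix_mulVec_starVec (G := G) v
  have hge : (G.degree v : ℝ) + 1 ≤ mu ⟨0, hn0⟩ :=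
    le_of_mul_le_mul_right (a := (G.degree v : ℝ) * (G.degree v + 1)) (by linarith)
      (mul_pos hpos (by positivity))
  refine ⟨hv ▸ hge, fun heq => ⟨v, ?_⟩, fun ⟨w, hw⟩ => le_antisymm ?_ (hv ▸ hge)⟩
  · rw [hv] at heq
    rw [heq] at hray
    have huniv := SimpleGraph.isUniversal_of_dotProduct_lapMatrix_mulVec_starVec_le
      hG.preconnected v (by linarith)
    simpa using (G.degree_eq_card_sub_one v).2 huniv
  · have hmax : G.maxDegree = n - 1 := by
      have := G.maxDegree_lt_card_verts
      have := hw ▸ G.degree_le_maxDegree w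
      rw [Fintype.card_fin] at *
      omega
    calc mu ⟨0, hn0⟩ ≤ n := (hmu.head_le_iff hn0 _).2 fun x => by
          simpa using G.dotProduct_lapMatrix_mulVec_le_card_mul x
      _ = G.maxDegree + 1 := by rw [hmax, Nat.cast_sub (by omega)]; ring
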